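/- arXiv:1801.04902 — 2 statements merged into one kernel-verified Lean document; each statement's English description precedes it below -/
import Mathlib

section
/- Let s ∈ ℝ and −1 < α < 1. For every sequence of real numbers (u_ℓ)_{ℓ∈ℕ} with ∑_{ℓ=0}^{∞} (ℓ+1/2)^{2s}·u_ℓ² < ∞, one has lim_{δ→0⁺} ∑_{ℓ=0}^{∞} (ℓ+1/2)^{2(s−2)}·(λ_δ(ℓ) + ℓ(ℓ+1))²·u_ℓ² = 0. (This expresses, in coefficient form, that L_δ → L_0 strongly as operators from H^s(S²) to H^{s−2}(S²) as δ → 0.) -/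
open MeasureTheory Real Polynomial

/-- The ℓ-th Legendre polynomial, via Rodrigues' formula. -/
noncomputable def legendre (l : ℕ) : Polynomial ℝ :=
  (((2 : ℝ) ^ l * l.factorial)⁻¹) • ((derivative (R := ℝ)) ^ l) ((X ^ 2 - 1) ^ l)

/-- The eigenvalue `λ_δ(ℓ)` of the nonlocal Laplace–Beltrami operator with the weakly
singular kernel with singularity strength `α` and horizon `δ`. -/
noncomputable def lambdaNL (α δ : ℝ) (l : ℕ) : ℝ :=
  2 * π * ∫ t in (1 - δ ^ 2 / 2)..1,
    ((legendre l).eval t - 1) * ((1 + α) * (2 : ℝ) ^ (1 + α) / (π * δ ^ (2 + 2 * α) * (1 - t) ^ (1 - α)))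

/-! Put `h = δ²/2`. The substitution `t = 1 - u` turns `λ_δ(ℓ) + ℓ(ℓ+1)` into
`c_δ ∫₀ʰ R_ℓ(u) u^(α-1) du` with `R_ℓ(u) = P_ℓ(1-u) - 1 + ℓ(ℓ+1)u/2` (`legendreTaylorRemainder`)
and `c_δ` (`kernelConst`) normalised by `c_δ h^(α+1) = 2(1+α)`, i.e. `c_δ ∫₀ʰ u · u^(α-1) du = 2`.

Since `P_ℓ(1) = 1` and `P_ℓ'(1) = ℓ(ℓ+1)/2`, `R_ℓ(u) = O(u²)` for fixed `ℓ`, so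
`λ_δ(ℓ) → -ℓ(ℓ+1)` as `δ → 0`. Uniformly in `ℓ`, `|R_ℓ(u)| ≤ ℓ(ℓ+1) u` because
`|P_ℓ'| ≤ ℓ(ℓ+1)/2` on `[0, 1]`: by the Legendre equation the energy
`(1 - x²) P_ℓ''² + (ℓ(ℓ+1) - 2) P_ℓ'²` is nondecreasing on `[0, 1]`. Hence
`|λ_δ(ℓ) + ℓ(ℓ+1)| ≤ 2ℓ(ℓ+1) ≤ 2(ℓ+1/2)²`, and dominated convergence for series concludes. -/

namespace Polynomial

variable {R : Type*} [CommRing R]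

theorem eval_iterate_derivative_X_sub_C_pow_mul (a : R) (g : R[X]) (n : ℕ) :
    (derivative^[n] ((X - C a) ^ n * g)).eval a = n.factorial * g.eval a := by
  induction n generalizing g with
  | zero => simp
  | succ n ih =>
    have hd : derivative ((X - C a) ^ (n + 1) * g)
        = (X - C a) ^ n * ((n + 1 : R[X]) * g + (X - C a) * derivative g) := by
      simp only [derivative_mul, derivative_pow, derivative_sub, derivative_X, derivative_C,
        C_eq_natCast]
      push_cast
      ring
    rw [Function.iterate_succ_apply, hd, ih]
    simp [Nat.factorial_succ]
    ring

theorem iterate_derivative_X_sq_sub_one_mul (g : R[X]) (n : ℕ) :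
    derivative^[n + 2] ((X ^ 2 - 1) * g) = (X ^ 2 - 1) * derivative^[n + 2] g
      + 2 * (n + 2 : R[X]) * X * derivative^[n + 1] g
      + ((n + 2) * (n + 1) : R[X]) * derivative^[n] g := by
  induction n with
  | zero =>
    simp only [Function.iterate_succ_apply', Function.iterate_zero_apply, derivative_mul,
      derivative_add, derivative_sub, derivative_X_sq, derivative_one, derivative_X,
      derivative_ofNat, derivative_zero, map_ofNat]
    push_cast
    ring
  | succ n ih =>
    rw [Function.iterate_succ_apply', ih]
    simp only [Function.iterate_succ_apply', derivative_mul, derivative_add,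
      derivative_sub, derivative_X_sq, derivative_X, derivative_one, derivative_natCast,
      derivative_ofNat, map_ofNat]
    push_cast
    ring

theorem iterate_derivative_X_sq_sub_one_pow_ode (l : ℕ) :
    (X ^ 2 - 1) * derivative (derivative (derivative^[l] (((X : R[X]) ^ 2 - 1) ^ l)))
      + 2 * X * derivative (derivative^[l] ((X ^ 2 - 1) ^ l))
      = (l * (l + 1) : R[X]) * derivative^[l] ((X ^ 2 - 1) ^ l) := by
  rcases l with _ | n
  · simp
  set u : R[X] := (X ^ 2 - 1) ^ (n + 1)
  set w := derivative^[n + 1] u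
  have hu : (X ^ 2 - 1) * derivative u = ((2 * (n + 1) : ℕ) : R[X]) * (u * X) := by
    simp only [u, derivative_pow, derivative_sub, derivative_X, derivative_one,
      C_eq_natCast]
    push_cast
    ring
  have h := congrArg (derivative^[n + 2]) hu
  simp only [iterate_derivative_X_sq_sub_one_mul, iterate_derivative_natCast_mul,
    iterate_derivative_mul_X, ← Function.iterate_succ_apply] at h
  have hw1 : derivative^[n + 2] u = derivative w := Function.iterate_succ_apply' _ _ _
  have hw2 : derivative^[n + 3] u = derivative (derivative w) := by
    rw [Function.iterate_succ_apply', hw1]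
  simp only [Nat.succ_eq_add_one, Nat.add_succ_sub_one] at h
  rw [hw2, hw1] at h
  push_cast at h ⊢
  linear_combination h

theorem exists_abs_eval_le_mul_sq {p : ℝ[X]} (h0 : p.eval 0 = 0)
    (h1 : (derivative p).eval 0 = 0) {K : Set ℝ} (hK : IsCompact K) :
    ∃ M, ∀ u ∈ K, |p.eval u| ≤ M * u ^ 2 := by
  obtain ⟨q, rfl⟩ : X ^ 2 ∣ p := by
    refine X_pow_dvd_iff.mpr fun d hd => ?_
    interval_cases d
    · rwa [coeff_zero_eq_eval_zero]
    · simpa [← coeff_zero_eq_eval_zero, coeff_derivative] using h1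
  obtain ⟨M, hM⟩ := hK.exists_bound_of_continuousOn q.continuousOn
  refine ⟨M, fun u hu => ?_⟩
  rw [eval_mul, eval_pow, eval_X, abs_mul, abs_of_nonneg (sq_nonneg u), mul_comm M]
  exact mul_le_mul_of_nonneg_left (hM u hu) (sq_nonneg u)

end Polynomial

theorem legendre_eq_smul_iterate_derivative (l : ℕ) :
    legendre l = ((2 : ℝ) ^ l * l.factorial)⁻¹ • derivative^[l] ((X ^ 2 - 1) ^ l) := by
  rw [legendre, Module.End.pow_apply]

theorem legendre_zero : legendre 0 = 1 := by
  simp [legendre_eq_smul_iterate_derivative]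

theorem legendre_one : legendre 1 = X := by
  simp only [legendre_eq_smul_iterate_derivative, Function.iterate_one, derivative_sub,
    derivative_X_sq, derivative_one, pow_one, Nat.factorial_one, Nat.cast_one, mul_one, sub_zero]
  rw [smul_eq_C_mul, ← mul_assoc, ← C_mul]
  norm_num

theorem legendre_eval_one (l : ℕ) : (legendre l).eval 1 = 1 := by
  have hfactor : ((X : ℝ[X]) ^ 2 - 1) ^ l = (X - C 1) ^ l * (X + 1) ^ l := by
    rw [← mul_pow, C_1]; ring
  rw [legendre_eq_smul_iterate_derivative, eval_smul, hfactor,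
    eval_iterate_derivative_X_sub_C_pow_mul]
  simp only [eval_pow, eval_add, eval_X, eval_one, smul_eq_mul]
  have : (l.factorial : ℝ) ≠ 0 := by positivity
  field_simp
  norm_num

theorem legendre_ode (l : ℕ) :
    (X ^ 2 - 1) * derivative (derivative (legendre l)) + 2 * X * derivative (legendre l)
      = (l * (l + 1) : ℝ[X]) * legendre l := by
  rw [legendre_eq_smul_iterate_derivative]
  simp only [derivative_smul, mul_smul_comm, ← smul_add, iterate_derivative_X_sq_sub_one_pow_ode]

theorem derivative_legendre_eval_one (l : ℕ) :
    (derivative (legendre l)).eval 1 = l * (l + 1) / 2 := by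
  have h := congrArg (eval 1) (legendre_ode l)
  simp only [eval_add, eval_mul, eval_sub, eval_pow, eval_X, eval_one, eval_ofNat, eval_natCast,
    legendre_eval_one] at h
  linarith

theorem derivative_legendre_ode (l : ℕ) :
    (X ^ 2 - 1) * derivative (derivative (derivative (legendre l)))
      + 4 * X * derivative (derivative (legendre l))
      = (l * (l + 1) - 2 : ℝ[X]) * derivative (legendre l) := by
  have h := congrArg derivative (legendre_ode l)
  simp only [derivative_add, derivative_mul, derivative_sub, derivative_X_sq, derivative_one,
    derivative_X, derivative_ofNat, derivative_natCast, map_ofNat] at h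
  linear_combination h

theorem abs_eval_derivative_legendre_le (l : ℕ) {x : ℝ} (hx : x ∈ Set.Icc (0 : ℝ) 1) :
    |(derivative (legendre l)).eval x| ≤ l * (l + 1) / 2 := by
  rcases lt_or_ge l 2 with hl | hl
  · interval_cases l <;> simp [legendre_zero, legendre_one]
  set Q := derivative (legendre l)
  set G : ℝ[X] := (1 - X ^ 2) * derivative Q ^ 2 + (l * (l + 1) - 2 : ℝ[X]) * Q ^ 2
  have hG : derivative G = 6 * X * derivative Q ^ 2 := by
    simp only [G, derivative_add, derivative_mul, derivative_sub, derivative_one, derivative_pow,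
      derivative_natCast, derivative_X, derivative_ofNat, Nat.cast_ofNat, map_ofNat]
    linear_combination (-2 * derivative Q) * derivative_legendre_ode l
  have hmono : MonotoneOn G.eval (Set.Icc 0 1) := by
    refine monotoneOn_of_deriv_nonneg (convex_Icc 0 1) G.continuousOn
      G.differentiable.differentiableOn fun y hy => ?_
    rw [interior_Icc] at hy
    rw [Polynomial.deriv, hG]
    simp only [eval_mul, eval_pow, eval_X, eval_ofNat]
    have := hy.1.le
    positivity
  have hG1 : G.eval 1 = (l * (l + 1) - 2) * (l * (l + 1) / 2) ^ 2 := by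
    simp [G, Q, derivative_legendre_eval_one]
  have hlam : (2 : ℝ) < l * (l + 1) := by
    have : (2 : ℝ) ≤ l := by exact_mod_cast hl
    nlinarith
  have hGx : (l * (l + 1) - 2) * Q.eval x ^ 2 ≤ (l * (l + 1) - 2) * (l * (l + 1) / 2) ^ 2 := by
    rw [← hG1]
    refine le_trans ?_ (hmono hx ⟨zero_le_one, le_rfl⟩ hx.2)
    have hx2 : x ^ 2 ≤ 1 := by nlinarith [hx.1, hx.2]
    simp only [G, eval_add, eval_mul, eval_sub, eval_one, eval_pow, eval_X, eval_natCast,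
      eval_ofNat]
    nlinarith [sq_nonneg ((derivative Q).eval x)]
  exact abs_le_of_sq_le_sq (le_of_mul_le_mul_left hGx (by linarith)) (by positivity)

theorem abs_legendre_eval_one_sub_sub_one_le (l : ℕ) {u : ℝ} (hu : u ∈ Set.Icc (0 : ℝ) 1) :
    |(legendre l).eval (1 - u) - 1| ≤ l * (l + 1) / 2 * u := by
  have h := Convex.norm_image_sub_le_of_norm_hasDerivWithin_le
    (fun x _ => ((legendre l).hasDerivAt x).hasDerivWithinAt)
    (fun x hx => abs_eval_derivative_legendre_le l hx) (convex_Icc 0 1)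
    (Set.right_mem_Icc.mpr zero_le_one)
    (show 1 - u ∈ Set.Icc (0 : ℝ) 1 from ⟨by linarith [hu.2], by linarith [hu.1]⟩)
  rwa [Real.norm_eq_abs, legendre_eval_one, Real.norm_eq_abs, sub_sub_cancel_left, abs_neg,
    abs_of_nonneg hu.1] at h

noncomputable def legendreTaylorRemainder (l : ℕ) (u : ℝ) : ℝ :=
  (legendre l).eval (1 - u) - 1 + l * (l + 1) / 2 * u

theorem abs_legendreTaylorRemainder_le (l : ℕ) {u : ℝ} (hu : u ∈ Set.Icc (0 : ℝ) 1) :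
    |legendreTaylorRemainder l u| ≤ l * (l + 1) * u := by
  have hlin : 0 ≤ (l : ℝ) * (l + 1) / 2 * u := by have := hu.1; positivity
  calc |legendreTaylorRemainder l u|
      ≤ |(legendre l).eval (1 - u) - 1| + |(l : ℝ) * (l + 1) / 2 * u| := abs_add_le _ _
    _ ≤ l * (l + 1) * u := by
        linarith [abs_legendre_eval_one_sub_sub_one_le l hu, abs_of_nonneg hlin]

theorem exists_abs_legendreTaylorRemainder_le (l : ℕ) :
    ∃ M, ∀ u ∈ Set.Icc (0 : ℝ) 1, |legendreTaylorRemainder l u| ≤ M * u ^ 2 := by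
  have h := Polynomial.exists_abs_eval_le_mul_sq (p := (legendre l).comp (1 - X) - 1
    + C ((l : ℝ) * (l + 1) / 2) * X) (by simp [legendre_eval_one])
    (by simp [derivative_comp, derivative_legendre_eval_one]) (isCompact_Icc (a := 0) (b := 1))
  simpa [legendreTaylorRemainder] using h

section WeightedIntegral

variable {g : ℝ → ℝ} {α p h M : ℝ}

theorem integral_mul_rpow_sub_one_self (hα : -1 < α) (hh : 0 ≤ h) :
    ∫ u in (0 : ℝ)..h, u * u ^ (α - 1) = h ^ (α + 1) / (α + 1) := by
  have hae : ∀ u ∈ Set.uIoc 0 h, u * u ^ (α - 1) = u ^ α := fun u hu => by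
    rw [Set.uIoc_of_le hh] at hu
    rw [Real.rpow_sub_one hu.1.ne', mul_div_cancel₀ _ hu.1.ne']
  rw [intervalIntegral.integral_congr_ae (Filter.Eventually.of_forall hae),
    integral_rpow (Or.inl hα),
    Real.zero_rpow (by linarith), sub_zero]

theorem abs_mul_rpow_sub_one_le {u : ℝ} (hu : 0 < u) (hg : |g u| ≤ M * u ^ p) :
    |g u * u ^ (α - 1)| ≤ M * u ^ (α + p - 1) := by
  rw [abs_mul, abs_of_pos (Real.rpow_pos_of_pos hu _), show α + p - 1 = p + (α - 1) by ring,
    Real.rpow_add hu, ← mul_assoc]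
  exact mul_le_mul_of_nonneg_right hg (Real.rpow_nonneg hu.le _)

theorem intervalIntegrable_mul_rpow_sub_one (hg : Continuous g) (hαp : 0 < α + p) (hh : 0 ≤ h)
    (hbound : ∀ u ∈ Set.Ioc 0 h, |g u| ≤ M * u ^ p) :
    IntervalIntegrable (fun u => g u * u ^ (α - 1)) volume 0 h := by
  refine ((intervalIntegral.intervalIntegrable_rpow' (r := α + p - 1) (by linarith)).const_mul
    M).mono_fun
    (hg.measurable.mul (measurable_id.pow_const _)).aestronglyMeasurable ?_
  rw [Set.uIoc_of_le hh]
  refine (ae_restrict_iff' measurableSet_Ioc).mpr (Filter.Eventually.of_forall fun u hu => ?_)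
  simp only [Real.norm_eq_abs]
  exact (abs_mul_rpow_sub_one_le hu.1 (hbound u hu)).trans (le_abs_self _)

theorem abs_integral_mul_rpow_sub_one_le (hαp : 0 < α + p) (hh : 0 ≤ h)
    (hbound : ∀ u ∈ Set.Ioc 0 h, |g u| ≤ M * u ^ p) :
    |∫ u in (0 : ℝ)..h, g u * u ^ (α - 1)| ≤ M * (h ^ (α + p) / (α + p)) := by
  have hint := intervalIntegral.norm_integral_le_of_norm_le (f := fun u => g u * u ^ (α - 1)) hh
    (Filter.Eventually.of_forall fun u hu => abs_mul_rpow_sub_one_le hu.1 (hbound u hu))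
    ((intervalIntegral.intervalIntegrable_rpow' (r := α + p - 1) (by linarith)).const_mul M)
  rwa [intervalIntegral.integral_const_mul, integral_rpow (Or.inl (by linarith)),
    sub_add_cancel, Real.zero_rpow hαp.ne', sub_zero] at hint

end WeightedIntegral

noncomputable def kernelConst (α δ : ℝ) : ℝ := 2 * (1 + α) * 2 ^ (1 + α) / δ ^ (2 + 2 * α)

section Eigenvalue

variable {α δ : ℝ}

theorem kernelConst_pos (hα : -1 < α) (hδ : 0 < δ) : 0 < kernelConst α δ := by
  have : 0 < 1 + α := by linarith
  unfold kernelConst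
  positivity

theorem kernelConst_mul_rpow (hδ : 0 < δ) :
    kernelConst α δ * (δ ^ 2 / 2) ^ (α + 1) = 2 * (1 + α) := by
  have hpow : (δ ^ 2 / 2) ^ (α + 1) = δ ^ (2 + 2 * α) / 2 ^ (1 + α) := by
    rw [Real.div_rpow (by positivity) zero_le_two, ← Real.rpow_natCast, ← Real.rpow_mul hδ.le]
    push_cast
    ring_nf
  rw [kernelConst, hpow]
  have : 0 < δ ^ (2 + 2 * α) := Real.rpow_pos_of_pos hδ _
  have : (0 : ℝ) < 2 ^ (1 + α) := Real.rpow_pos_of_pos two_pos _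
  field_simp

theorem Ioc_zero_sq_div_two_subset_Icc (hδ : 0 ≤ δ) (hδ1 : δ ≤ 1) :
    Set.Ioc 0 (δ ^ 2 / 2) ⊆ Set.Icc (0 : ℝ) 1 := fun u hu =>
  ⟨hu.1.le, by linarith [hu.2, pow_le_one₀ hδ hδ1 (n := 2)]⟩

theorem lambdaNL_eq_integral (hδ : 0 < δ) (l : ℕ) :
    lambdaNL α δ l
      = kernelConst α δ
        * ∫ u in (0 : ℝ)..δ ^ 2 / 2, ((legendre l).eval (1 - u) - 1) * u ^ (α - 1) := by
  have hsub := intervalIntegral.integral_comp_sub_left (a := 0) (b := δ ^ 2 / 2)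
    (fun t => ((legendre l).eval t - 1)
      * ((1 + α) * (2 : ℝ) ^ (1 + α) / (π * δ ^ (2 + 2 * α) * (1 - t) ^ (1 - α)))) 1
  rw [sub_zero] at hsub
  rw [lambdaNL, ← hsub, ← intervalIntegral.integral_const_mul,
    ← intervalIntegral.integral_const_mul]
  refine intervalIntegral.integral_congr fun u hu => ?_
  rw [Set.uIcc_of_le (by positivity)] at hu
  simp only [sub_sub_cancel, kernelConst]
  rw [show α - 1 = -(1 - α) by ring, Real.rpow_neg hu.1]
  field_simp

theorem lambdaNL_add_eq_integral (hα : -1 < α) (hδ : 0 < δ) (hδ1 : δ ≤ 1) (l : ℕ) :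
    lambdaNL α δ l + l * (l + 1)
      = kernelConst α δ
        * ∫ u in (0 : ℝ)..δ ^ 2 / 2, legendreTaylorRemainder l u * u ^ (α - 1) := by
  have hh : 0 ≤ δ ^ 2 / 2 := by positivity
  have hP : ∀ u ∈ Set.Ioc (0 : ℝ) (δ ^ 2 / 2),
      |(legendre l).eval (1 - u) - 1| ≤ l * (l + 1) / 2 * u ^ (1 : ℝ) := fun u hu => by
    rw [Real.rpow_one]
    exact abs_legendre_eval_one_sub_sub_one_le l (Ioc_zero_sq_div_two_subset_Icc hδ.le hδ1 hu)
  have hlin : ∀ u ∈ Set.Ioc (0 : ℝ) (δ ^ 2 / 2),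
      |(l : ℝ) * (l + 1) / 2 * u| ≤ l * (l + 1) / 2 * u ^ (1 : ℝ) := fun u hu => by
    rw [Real.rpow_one, abs_of_nonneg (by have := hu.1.le; positivity)]
  simp only [legendreTaylorRemainder, add_mul ((legendre l).eval _ - 1)]
  rw [intervalIntegral.integral_add
      (intervalIntegrable_mul_rpow_sub_one (by fun_prop) (by linarith) hh hP)
      (intervalIntegrable_mul_rpow_sub_one (by fun_prop) (by linarith) hh hlin),
    mul_add (kernelConst α δ), ← lambdaNL_eq_integral hδ l]
  simp only [mul_assoc]
  rw [intervalIntegral.integral_const_mul, integral_mul_rpow_sub_one_self hα hh]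
  have hne : α + 1 ≠ 0 := by linarith
  congr 1
  calc (l : ℝ) * (l + 1)
        = l * (l + 1) / 2 * (kernelConst α δ * (δ ^ 2 / 2) ^ (α + 1)) / (α + 1) := by
        rw [kernelConst_mul_rpow hδ]; field_simp; ring
    _ = _ := by ring

theorem abs_lambdaNL_add_le (hα : -1 < α) (hδ : 0 < δ) (hδ1 : δ ≤ 1) (l : ℕ) :
    |lambdaNL α δ l + l * (l + 1)| ≤ 2 * (l * (l + 1)) := by
  have hbound : ∀ u ∈ Set.Ioc (0 : ℝ) (δ ^ 2 / 2),
      |legendreTaylorRemainder l u| ≤ l * (l + 1) * u ^ (1 : ℝ) := fun u hu => by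
    rw [Real.rpow_one]
    exact abs_legendreTaylorRemainder_le l (Ioc_zero_sq_div_two_subset_Icc hδ.le hδ1 hu)
  have hne : α + 1 ≠ 0 := by linarith
  rw [lambdaNL_add_eq_integral hα hδ hδ1, abs_mul, abs_of_pos (kernelConst_pos hα hδ)]
  calc kernelConst α δ * |∫ u in (0 : ℝ)..δ ^ 2 / 2, _|
      ≤ kernelConst α δ * (l * (l + 1) * ((δ ^ 2 / 2) ^ (α + 1) / (α + 1))) :=
        mul_le_mul_of_nonneg_left (abs_integral_mul_rpow_sub_one_le (by linarith)
          (by positivity) hbound) (kernelConst_pos hα hδ).le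
    _ = (kernelConst α δ * (δ ^ 2 / 2) ^ (α + 1)) * (l * (l + 1)) / (α + 1) := by ring
    _ = 2 * (l * (l + 1)) := by
        rw [kernelConst_mul_rpow hδ]
        field_simp
        ring

theorem abs_lambdaNL_add_le_mul_sq {M : ℝ} (hα : -1 < α) (hδ : 0 < δ) (hδ1 : δ ≤ 1)
    {l : ℕ}
    (hM : ∀ u ∈ Set.Icc (0 : ℝ) 1, |legendreTaylorRemainder l u| ≤ M * u ^ 2) :
    |lambdaNL α δ l + l * (l + 1)| ≤ M * (1 + α) / (α + 2) * δ ^ 2 := by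
  have hbound : ∀ u ∈ Set.Ioc (0 : ℝ) (δ ^ 2 / 2),
      |legendreTaylorRemainder l u| ≤ M * u ^ (2 : ℝ) := fun u hu => by
    rw [Real.rpow_two]
    exact hM u (Ioc_zero_sq_div_two_subset_Icc hδ.le hδ1 hu)
  have hh : δ ^ 2 / 2 ≠ 0 := by positivity
  rw [lambdaNL_add_eq_integral hα hδ hδ1, abs_mul, abs_of_pos (kernelConst_pos hα hδ)]
  calc kernelConst α δ * |∫ u in (0 : ℝ)..δ ^ 2 / 2, _|
      ≤ kernelConst α δ * (M * ((δ ^ 2 / 2) ^ (α + 2) / (α + 2))) :=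
        mul_le_mul_of_nonneg_left (abs_integral_mul_rpow_sub_one_le (by linarith)
          (by positivity) hbound) (kernelConst_pos hα hδ).le
    _ = (kernelConst α δ * (δ ^ 2 / 2) ^ (α + 1)) * M * (δ ^ 2 / 2) / (α + 2) := by
        rw [show α + 2 = α + 1 + 1 by ring, Real.rpow_add_one hh]
        ring
    _ = M * (1 + α) / (α + 2) * δ ^ 2 := by
        rw [kernelConst_mul_rpow hδ]
        ring

theorem tendsto_lambdaNL_add (hα : -1 < α) (l : ℕ) :
    Filter.Tendsto (fun δ => lambdaNL α δ l + l * (l + 1))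
      (nhdsWithin 0 (Set.Ioi 0)) (nhds 0) := by
  obtain ⟨M, hM⟩ := exists_abs_legendreTaylorRemainder_le l
  refine squeeze_zero_norm' (a := fun δ => M * (1 + α) / (α + 2) * δ ^ 2) ?_ ?_
  · filter_upwards [Ioc_mem_nhdsGT one_pos] with δ hδ
    exact abs_lambdaNL_add_le_mul_sq hα hδ.1 hδ.2 hM
  · exact tendsto_nhdsWithin_of_tendsto_nhds
      ((continuous_const.mul (continuous_pow 2)).tendsto' 0 0 (by simp))

theorem rpow_mul_sq_lambdaNL_add_le (s : ℝ) (hα : -1 < α) (hδ : 0 < δ) (hδ1 : δ ≤ 1)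
    (l : ℕ) :
    ((l : ℝ) + 1 / 2) ^ (2 * (s - 2)) * (lambdaNL α δ l + l * (l + 1)) ^ 2
      ≤ 4 * ((l : ℝ) + 1 / 2) ^ (2 * s) := by
  have h := abs_le.mp (abs_lambdaNL_add_le hα hδ hδ1 l)
  have hl : (l : ℝ) * (l + 1) ≤ ((l : ℝ) + 1 / 2) ^ 2 := by nlinarith
  have hsq : (lambdaNL α δ l + l * (l + 1)) ^ 2 ≤ 4 * ((l : ℝ) + 1 / 2) ^ (4 : ℝ) :=
    calc (lambdaNL α δ l + l * (l + 1)) ^ 2 ≤ (2 * (l * (l + 1))) ^ 2 := sq_le_sq' h.1 h.2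
      _ ≤ (2 * ((l : ℝ) + 1 / 2) ^ 2) ^ 2 := by gcongr
      _ = 4 * ((l : ℝ) + 1 / 2) ^ (4 : ℝ) := by norm_cast; ring
  calc ((l : ℝ) + 1 / 2) ^ (2 * (s - 2)) * (lambdaNL α δ l + l * (l + 1)) ^ 2
      ≤ ((l : ℝ) + 1 / 2) ^ (2 * (s - 2)) * (4 * ((l : ℝ) + 1 / 2) ^ (4 : ℝ)) := by gcongr
    _ = 4 * ((l : ℝ) + 1 / 2) ^ (2 * (s - 2) + 4) := by rw [Real.rpow_add (by positivity)]; ring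
    _ = 4 * ((l : ℝ) + 1 / 2) ^ (2 * s) := by ring_nf

end Eigenvalue

theorem nonlocal_operator_strong_convergence_general (s α : ℝ) (hα : -1 < α)
    (u : ℕ → ℝ)
    (hu : Summable fun l : ℕ => ((l : ℝ) + 1 / 2) ^ (2 * s) * u l ^ 2) :
    Filter.Tendsto
      (fun δ : ℝ => ∑' l : ℕ,
        ((l : ℝ) + 1 / 2) ^ (2 * (s - 2)) * (lambdaNL α δ l + (l : ℝ) * ((l : ℝ) + 1)) ^ 2 * u l ^ 2)
      (nhdsWithin 0 (Set.Ioi 0)) (nhds 0) := by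
  have hdom := tendsto_tsum_of_dominated_convergence (g := fun _ => (0 : ℝ))
    (f := fun δ (l : ℕ) =>
      ((l : ℝ) + 1 / 2) ^ (2 * (s - 2)) * (lambdaNL α δ l + l * (l + 1)) ^ 2 * u l ^ 2)
    (bound := fun l : ℕ => 4 * ((l : ℝ) + 1 / 2) ^ (2 * s) * u l ^ 2)
    (by simpa [mul_assoc] using hu.mul_left 4)
    (fun l => by simpa using (((tendsto_lambdaNL_add hα l).pow 2).const_mul
      (((l : ℝ) + 1 / 2) ^ (2 * (s - 2)))).mul_const (u l ^ 2))
    (Filter.eventually_of_mem (Ioc_mem_nhdsGT one_pos) fun δ hδ l => ?_)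
  · simpa using hdom
  rw [Real.norm_eq_abs, abs_of_nonneg (by positivity)]
  exact mul_le_mul_of_nonneg_right (rpow_mul_sq_lambdaNL_add_le s hα hδ.1 hδ.2 l) (sq_nonneg _)

/-- In coefficient form: `L_δ → L_0` strongly as operators from `H^s(S²)` to `H^{s-2}(S²)`
as `δ → 0⁺`. -/
theorem nonlocal_operator_strong_convergence (s α : ℝ) (hα : -1 < α) (hα1 : α < 1)
    (u : ℕ → ℝ)
    (hu : Summable fun l : ℕ => ((l : ℝ) + 1 / 2) ^ (2 * s) * u l ^ 2) :
    Filter.Tendsto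
      (fun δ : ℝ => ∑' l : ℕ,
        ((l : ℝ) + 1 / 2) ^ (2 * (s - 2)) * (lambdaNL α δ l + (l : ℝ) * ((l : ℝ) + 1)) ^ 2 * u l ^ 2)
      (nhdsWithin 0 (Set.Ioi 0)) (nhds 0) :=
  nonlocal_operator_strong_convergence_general s α hα u hu
end

section
/- Let ℓ ≥ 1 be a natural number, let w : [−1,1] → ℝ be a continuous weight function, let x_k = cos(kπ/ℓ) for 0 ≤ k ≤ ℓ be the Chebyshev–Lobatto points, and let μ_k = ∫_{−1}^{1} T_k(x)·w(x) dx for 0 ≤ k ≤ ℓ be the modified Chebyshev moments. Define the quadrature weights w_j = ((1 − (δ_{0,j} + δ_{ℓ,j})/2)/ℓ)·[μ_0 + (−1)^j·μ_ℓ + 2·∑_{k=1}^{ℓ−1} μ_k·cos(πjk/ℓ)] for 0 ≤ j ≤ ℓ, where δ_{k,j} is the Kronecker delta. Then ∫_{−1}^{1} f(x)·w(x) dx = ∑_{j=0}^{ℓ} w_j·f(x_j) for every polynomial f of degree at most ℓ. -/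
/-!
Both sides are linear in `f`, and `T_0, …, T_ℓ` span the polynomials of degree `≤ ℓ`, so it
suffices to take `f = T_m`. As `T_m(x_j) = cos(πjm/ℓ)`, the claim becomes
`∑_j w_j cos(πjm/ℓ) = μ_m`: the weights are the inverse discrete cosine transform of the moments.
This is the discrete orthogonality of the `cos(πjk/ℓ)` for the trapezoidal weights `c_j`
(`1/2` at both ends, `1` inside), which follows from the closed form
`sin(θ/2) · ∑_j c_j cos(jθ) = sin(ℓθ) cos(θ/2) / 2` at `θ = πn/ℓ`, where `sin(ℓθ) = 0`.
-/

open MeasureTheory Real Polynomial Polynomial.Chebyshev Finset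

noncomputable def trapezoidWeight (l j : ℕ) : ℝ :=
  1 - ((if j = 0 then (1 : ℝ) else 0) + (if j = l then (1 : ℝ) else 0)) / 2

lemma trapezoidWeight_zero {l : ℕ} (hl : l ≠ 0) : trapezoidWeight l 0 = 1 / 2 := by
  norm_num [trapezoidWeight, Ne.symm hl]

lemma trapezoidWeight_self {l : ℕ} (hl : l ≠ 0) : trapezoidWeight l l = 1 / 2 := by
  norm_num [trapezoidWeight, hl]

lemma trapezoidWeight_of_ne {l j : ℕ} (hj0 : j ≠ 0) (hjl : j ≠ l) : trapezoidWeight l j = 1 := by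
  simp [trapezoidWeight, hj0, hjl]

lemma sum_trapezoidWeight_mul (l : ℕ) (g : ℕ → ℝ) :
    ∑ j ∈ range (l + 1), trapezoidWeight l j * g j =
      ∑ j ∈ range (l + 1), g j - (g 0 + g l) / 2 := by
  have h (j : ℕ) : trapezoidWeight l j * g j =
      g j - ((if j = 0 then g j else 0) + (if l = j then g j else 0)) / 2 := by
    unfold trapezoidWeight; split_ifs <;> grind
  simp only [h, sum_sub_distrib, ← sum_div, sum_add_distrib, sum_ite_eq', sum_ite_eq, mem_range]
  simp

lemma two_mul_sum_trapezoidWeight_mul {l : ℕ} (hl : l ≠ 0) (g : ℕ → ℝ) :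
    2 * ∑ j ∈ range (l + 1), trapezoidWeight l j * g j =
      g 0 + g l + 2 * ∑ j ∈ Ioo 0 l, g j := by
  rw [sum_trapezoidWeight_mul, sum_range_succ, range_eq_Ico,
    sum_eq_sum_Ico_succ_bot (Nat.pos_of_ne_zero hl), Finset.Ico_add_one_left_eq_Ioo]
  ring

lemma sin_half_mul_sum_trapezoidWeight_mul_cos (l : ℕ) (θ : ℝ) :
    sin (θ / 2) * ∑ j ∈ range (l + 1), trapezoidWeight l j * cos (j * θ) =
      sin (l * θ) * cos (θ / 2) / 2 := by
  have h := Real.sin_mul_sum_cos l θ 0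
  simp only [add_zero, mul_comm θ] at h
  rw [sum_trapezoidWeight_mul, sum_range_succ, mul_sub, mul_add, h]
  set u := (l : ℝ) * θ / 2
  rw [show (l - 1) * θ / 2 = u - θ / 2 by ring, show (l : ℝ) * θ = 2 * u by ring, sin_two_mul,
    cos_two_mul, cos_sub]
  simp only [CharP.cast_eq_zero, zero_mul, cos_zero]
  linear_combination sin (θ / 2) * sin_sq_add_cos_sq u

lemma sum_trapezoidWeight_mul_cos_int {l : ℕ} (hl : l ≠ 0) (n : ℤ) :
    ∑ j ∈ range (l + 1), trapezoidWeight l j * cos (π * j * n / l) =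
      if (2 * l : ℤ) ∣ n then (l : ℝ) else 0 := by
  split_ifs with hdvd
  · obtain ⟨t, rfl⟩ := hdvd
    have hcos (j : ℕ) : cos (π * j * ((2 * l * t : ℤ) : ℝ) / l) = 1 := by
      rw [← cos_int_mul_two_pi (j * t)]
      congr 1
      push_cast
      field_simp
    simp_rw [hcos, mul_one]
    simpa using sum_trapezoidWeight_mul l 1
  · have hsin : sin (π * n / l / 2) ≠ 0 := by
      rw [Ne, sin_eq_zero_iff]
      rintro ⟨k, hk⟩
      refine hdvd ⟨k, ?_⟩
      have : (n : ℝ) = 2 * l * k := by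
        field_simp at hk
        linear_combination -hk
      exact_mod_cast this
    have h := sin_half_mul_sum_trapezoidWeight_mul_cos l (π * n / l)
    rw [show (l : ℝ) * (π * n / l) = n * π by field_simp, sin_int_mul_pi, zero_mul,
      zero_div] at h
    convert (mul_eq_zero.mp h).resolve_left hsin using 4 with j
    ring

lemma two_mul_trapezoidWeight_mul_sum_cos_mul_cos {l k m : ℕ} (hl : l ≠ 0) (hk : k ≤ l)
    (hm : m ≤ l) :
    2 * trapezoidWeight l k *
        ∑ j ∈ range (l + 1), trapezoidWeight l j * (cos (π * j * k / l) * cos (π * j * m / l)) =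
      if k = m then (l : ℝ) else 0 := by
  have hprod (j : ℕ) : trapezoidWeight l j * (cos (π * j * k / l) * cos (π * j * m / l)) =
      (trapezoidWeight l j * cos (π * j * ((k - m : ℤ) : ℝ) / l) +
        trapezoidWeight l j * cos (π * j * ((k + m : ℤ) : ℝ) / l)) / 2 := by
    have h := two_mul_cos_mul_cos (π * j * k / l) (π * j * m / l)
    push_cast
    rw [show π * j * (k - m) / l = π * j * k / l - π * j * m / l by ring,
      show π * j * (k + m) / l = π * j * k / l + π * j * m / l by ring]
    linear_combination trapezoidWeight l j * h / 2
  have not_dvd {x : ℤ} (hx : x ≠ 0) (hlt : |x| < 2 * l) : ¬ (2 * l : ℤ) ∣ x :=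
    fun hd => hx (Int.eq_zero_of_abs_lt_dvd hd hlt)
  simp_rw [hprod, ← sum_div, sum_add_distrib, sum_trapezoidWeight_mul_cos_int hl]
  rcases eq_or_ne k m with rfl | hkm
  · rw [sub_self, if_pos (dvd_zero _), if_pos rfl]
    obtain rfl | rfl | ⟨hk0, hkl⟩ : k = 0 ∨ k = l ∨ (k ≠ 0 ∧ k ≠ l) := by omega
    · rw [if_pos (by simp), trapezoidWeight_zero hl]; ring
    · rw [if_pos ⟨1, by ring⟩, trapezoidWeight_self hl]; ring
    · rw [if_neg (not_dvd (by omega) (abs_lt.mpr ⟨by omega, by omega⟩)),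
        trapezoidWeight_of_ne hk0 hkl]
      ring
  · rw [if_neg (not_dvd (by omega) (abs_lt.mpr ⟨by omega, by omega⟩)),
      if_neg (not_dvd (by omega) (abs_lt.mpr ⟨by omega, by omega⟩)), if_neg hkm]
    ring

noncomputable def clenshawCurtisWeight (l : ℕ) (μ : ℕ → ℝ) (j : ℕ) : ℝ :=
  trapezoidWeight l j / l *
    (μ 0 + (-1) ^ j * μ l + 2 * ∑ k ∈ Ioo 0 l, μ k * cos (π * j * k / l))

lemma clenshawCurtisWeight_eq {l : ℕ} (hl : l ≠ 0) (μ : ℕ → ℝ) (j : ℕ) :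
    clenshawCurtisWeight l μ j =
      2 * trapezoidWeight l j / l *
        ∑ k ∈ range (l + 1), trapezoidWeight l k * (μ k * cos (π * j * k / l)) := by
  have hcos : cos (π * j * l / l) = (-1) ^ j := by
    rw [← cos_nat_mul_pi]; congr 1; field_simp
  have h := two_mul_sum_trapezoidWeight_mul hl fun k => μ k * cos (π * j * k / l)
  simp only [CharP.cast_eq_zero, mul_zero, zero_div, cos_zero, mul_one, hcos] at h
  rw [clenshawCurtisWeight]
  linear_combination -(trapezoidWeight l j / l) * h

lemma sum_clenshawCurtisWeight_mul_cos {l m : ℕ} (hl : l ≠ 0) (hm : m ≤ l) (μ : ℕ → ℝ) :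
    ∑ j ∈ range (l + 1), clenshawCurtisWeight l μ j * cos (π * j * m / l) = μ m := by
  calc ∑ j ∈ range (l + 1), clenshawCurtisWeight l μ j * cos (π * j * m / l)
      = ∑ k ∈ range (l + 1), μ k / l * (2 * trapezoidWeight l k * ∑ j ∈ range (l + 1),
          trapezoidWeight l j * (cos (π * j * k / l) * cos (π * j * m / l))) := by
        simp_rw [clenshawCurtisWeight_eq hl, mul_sum, sum_mul]
        rw [sum_comm]
        refine sum_congr rfl fun k _ => sum_congr rfl fun j _ => ?_
        ring
    _ = ∑ k ∈ range (l + 1), μ k / l * if k = m then (l : ℝ) else 0 :=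
        sum_congr rfl fun k hk => by
          rw [two_mul_trapezoidWeight_mul_sum_cos_mul_cos hl
            (Nat.lt_succ_iff.mp (mem_range.mp hk)) hm]
    _ = μ m := by simp [Nat.lt_succ_iff.mpr hm, hl]

lemma mem_span_T_of_natDegree_le {f : ℝ[X]} {l : ℕ} (hf : f.natDegree ≤ l) :
    f ∈ Submodule.span ℝ ((fun k : ℕ => T ℝ k) '' Set.Iic l) := by
  have hspan := (chebyshevTsequence ℝ).span_degreeLE (m := l) fun i _ =>
    isUnit_iff_ne_zero.mpr (leadingCoeff_ne_zero.mpr ((chebyshevTsequence ℝ).ne_zero i))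
  exact hspan ▸ mem_degreeLE.mpr (natDegree_le_iff_degree_le.mp hf)

lemma sum_clenshawCurtisWeight_mul_eval_T_node {l k : ℕ} (hl : l ≠ 0) (hk : k ≤ l)
    (μ : ℕ → ℝ) :
    ∑ j ∈ range (l + 1), clenshawCurtisWeight l μ j * (T ℝ k).eval (node l j) = μ k := by
  rw [← sum_clenshawCurtisWeight_mul_cos hl hk μ]
  refine sum_congr rfl fun j _ => ?_
  rw [node, T_real_cos]
  congr 2
  push_cast
  ring

noncomputable def weightedIntegral {a b : ℝ} {w : ℝ → ℝ} (hw : IntervalIntegrable w volume a b) :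
    ℝ[X] →ₗ[ℝ] ℝ where
  toFun p := ∫ x in a..b, p.eval x * w x
  map_add' p q := by
    simp only [eval_add, add_mul]
    exact intervalIntegral.integral_add (hw.continuousOn_mul p.continuousOn)
      (hw.continuousOn_mul q.continuousOn)
  map_smul' c p := by
    simp only [eval_smul, smul_eq_mul, mul_assoc, intervalIntegral.integral_const_mul,
      RingHom.id_apply]

/-- Modified Clenshaw–Curtis quadrature for a general continuous weight `w`: with nodes the
Chebyshev–Lobatto points `x_j = cos(jπ/ℓ)` and weights computed from the modified Chebyshev
moments `μ_k = ∫ T_k(x) w(x) dx`, the quadrature is exact for polynomials of degree ≤ ℓ. -/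
theorem clenshaw_curtis_exact (l : ℕ) (hl : 1 ≤ l) (w : ℝ → ℝ)
    (hw : ContinuousOn w (Set.Icc (-1 : ℝ) 1))
    (μ : ℕ → ℝ)
    (hμ : ∀ k : ℕ, μ k = ∫ x in (-1 : ℝ)..1, (Polynomial.Chebyshev.T ℝ (k : ℤ)).eval x * w x)
    (W : ℕ → ℝ)
    (hW : ∀ j : ℕ, W j =
      (1 - ((if j = 0 then (1 : ℝ) else 0) + (if j = l then (1 : ℝ) else 0)) / 2) / (l : ℝ) *
        (μ 0 + (-1 : ℝ) ^ j * μ l +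
          2 * ∑ k ∈ Finset.Ioo 0 l, μ k * Real.cos (π * (j : ℝ) * (k : ℝ) / (l : ℝ))))
    (f : Polynomial ℝ) (hf : f.natDegree ≤ l) :
    (∫ x in (-1 : ℝ)..1, f.eval x * w x)
      = ∑ j ∈ Finset.range (l + 1), W j * f.eval (Real.cos ((j : ℝ) * π / (l : ℝ))) := by
  obtain rfl : W = clenshawCurtisWeight l μ := funext hW
  have hl0 : l ≠ 0 := by omega
  have hwI : IntervalIntegrable w volume (-1) 1 := hw.intervalIntegrable_of_Icc (by norm_num)
  let quadrature : ℝ[X] →ₗ[ℝ] ℝ :=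
    ∑ j ∈ range (l + 1), clenshawCurtisWeight l μ j • leval (node l j)
  have hT : Set.EqOn (weightedIntegral hwI) quadrature ((fun k : ℕ => T ℝ k) '' Set.Iic l) := by
    rintro _ ⟨k, hk, rfl⟩
    simp [quadrature, weightedIntegral, ← hμ, sum_clenshawCurtisWeight_mul_eval_T_node hl0 hk]
  simpa [quadrature, weightedIntegral, node] using
    LinearMap.eqOn_span hT (mem_span_T_of_natDegree_le hf)
end
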